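/- Fix a non-degenerate graded Hopf pairing on S_σ̃(W). For every n ≥ 0 and every length degree t ≥ 0, the induced bilinear form between the Hochschild homology H_n(S_σ(V), S_σ̃(W)_{(1)})_t of the Bar complex and the coHochschild homology Hoch^n(S_σ(V), S_σ̃(W)_{(1)})_t of the coBar complex is non-degenerate; in particular H_n(S_σ(V), S_σ̃(W)_{(1)}) ≅ Hoch^n(S_σ(V), S_σ̃(W)_{(1)}) as graded vector spaces. -/
import Mathlib


/-!
STATEMENT 8: Fix a non-degenerate graded Hopf pairing on `S_σ̃(W)`.  For every
`n ≥ 0` and length degree `t ≥ 0`, the induced bilinear form between the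
Hochschild homology `H_n(S_σ(V), S_σ̃(W)_{(1)})_t` of the Bar complex and the
coHochschild homology `Hoch^n(S_σ(V), S_σ̃(W)_{(1)})_t` of the coBar complex is
non-degenerate; in particular `H_n ≅ Hoch^n` as graded vector spaces.

Axiomatization: `A` stands for `S_σ(V)` (an algebra, with comultiplication
`comulA`), `M` for `S_σ̃(W)_{(1)}` with its `S_σ(V)`-bimodule structure (left
action by multiplication, right action through the augmentation `ε`) and its
`S_σ(V)`-bicomodule structure (trivial left coaction, right coaction by
deconcatenation); `φ` is the pairing between the two complexes induced by the
Hopf pairing, for which the Bar and coBar differentials are adjoint; `GH`/`GC`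
are the length gradations, preserved by the differentials, with
finite-dimensional components, on which `φ` is non-degenerate degreewise.
-/

noncomputable section

namespace Stmt8

open TensorProduct

variable (K A : Type) [CommRing K] [Ring A] [Algebra K A]

/-- A bimodule datum over the algebra `A`. -/
structure BimodData where
  carrier : Type
  [acg : AddCommGroup carrier]
  [mod : Module K carrier]
  actL : A ⊗[K] carrier →ₗ[K] carrier
  actR : carrier ⊗[K] A →ₗ[K] carrier

attribute [instance] BimodData.acg BimodData.mod

/-- A bicomodule datum over the coalgebra `A`. -/
structure BicomodData where
  carrier : Type
  [acg : AddCommGroup carrier]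
  [mod : Module K carrier]
  coactL : carrier →ₗ[K] A ⊗[K] carrier
  coactR : carrier →ₗ[K] carrier ⊗[K] A

attribute [instance] BicomodData.acg BicomodData.mod

variable {K A}

def BimodData.step (B : BimodData K A) : BimodData K A where
  carrier := B.carrier ⊗[K] A
  actL := (LinearMap.rTensor A B.actL) ∘ₗ (TensorProduct.assoc K A B.carrier A).symm.toLinearMap
  actR := (LinearMap.lTensor B.carrier (LinearMap.mul' K A)) ∘ₗ
    (TensorProduct.assoc K B.carrier A A).toLinearMap

/-- The `i`-th term `M ⊗ A^{⊗i}` of the Bar complex. -/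
def chain : ℕ → BimodData K A → BimodData K A
  | 0, B => B
  | (i+1), B => chain i B.step

def chainMap : (i : ℕ) → (B B' : BimodData K A) → (B.carrier →ₗ[K] B'.carrier) →
    ((chain i B).carrier →ₗ[K] (chain i B').carrier)
  | 0, _, _, f => f
  | (i+1), B, B', f => chainMap i B.step B'.step (LinearMap.rTensor A f)

/-- The Hochschild (Bar) differential. -/
def barD : (n : ℕ) → (B : BimodData K A) →
    ((chain (n+1) B).carrier →ₗ[K] (chain n B).carrier)
  | 0, B => B.actR - B.actL ∘ₗ (TensorProduct.comm K B.carrier A).toLinearMap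
  | (n+1), B =>
      show (chain (n+1) B.step).carrier →ₗ[K] (chain n B.step).carrier from
        (show (chain (n+1) B.step).carrier →ₗ[K] (chain n B.step).carrier from
          chainMap n B.step.step B.step (LinearMap.rTensor A B.actR)) - barD n B.step

variable (comulA : A →ₗ[K] A ⊗[K] A)

def BicomodData.step (B : BicomodData K A) : BicomodData K A where
  carrier := B.carrier ⊗[K] A
  coactL := (TensorProduct.assoc K A B.carrier A).toLinearMap ∘ₗ
    (LinearMap.rTensor A B.coactL)
  coactR := (TensorProduct.assoc K B.carrier A A).symm.toLinearMap ∘ₗ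
    (LinearMap.lTensor B.carrier comulA)

/-- The `i`-th term `M ⊗ A^{⊗i}` of the coBar complex. -/
def cochain : ℕ → BicomodData K A → BicomodData K A
  | 0, B => B
  | (i+1), B => cochain i (B.step comulA)

def cochainMap : (i : ℕ) → (B B' : BicomodData K A) → (B.carrier →ₗ[K] B'.carrier) →
    ((cochain comulA i B).carrier →ₗ[K] (cochain comulA i B').carrier)
  | 0, _, _, f => f
  | (i+1), B, B', f => cochainMap i (B.step comulA) (B'.step comulA) (LinearMap.rTensor A f)

/-- The coHochschild (coBar) differential. -/
def cobarD : (i : ℕ) → (B : BicomodData K A) →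
    ((cochain comulA i B).carrier →ₗ[K] (cochain comulA (i+1) B).carrier)
  | 0, B => B.coactR - (TensorProduct.comm K A B.carrier).toLinearMap ∘ₗ B.coactL
  | (i+1), B =>
      show (cochain comulA i (B.step comulA)).carrier →ₗ[K]
          (cochain comulA (i+1) (B.step comulA)).carrier from
        (show (cochain comulA i (B.step comulA)).carrier →ₗ[K]
            (cochain comulA (i+1) (B.step comulA)).carrier from
          cochainMap comulA i (B.step comulA) ((B.step comulA).step comulA)
            (LinearMap.rTensor A B.coactR)) - cobarD i (B.step comulA)

/-- Cycles of the Bar complex (`Z_0 = M`, `Z_{n+1} = ker d_{n+1}`). -/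
def cyclesBar (Bm : BimodData K A) : (n : ℕ) → Submodule K (chain n Bm).carrier
  | 0 => ⊤
  | (n+1) => LinearMap.ker (barD n Bm)

/-- Coboundaries of the coBar complex (`B^0 = 0`, `B^{n+1} = im δ_n`). -/
def coboundCobar (Bc : BicomodData K A) :
    (n : ℕ) → Submodule K (cochain comulA n Bc).carrier
  | 0 => ⊥
  | (n+1) => LinearMap.range (cobarD comulA n Bc)

lemma key {K : Type} [Field K] {U V U' V' : Type}
    [AddCommGroup U] [Module K U] [AddCommGroup V] [Module K V]
    [AddCommGroup U'] [Module K U'] [AddCommGroup V'] [Module K V']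
    [FiniteDimensional K U] [FiniteDimensional K V]
    (b : U →ₗ[K] V →ₗ[K] K)
    (hb1 : ∀ x, (∀ y, b x y = 0) → x = 0)
    (hb2 : ∀ y, (∀ x, b x y = 0) → y = 0)
    (b' : U' →ₗ[K] V' →ₗ[K] K)
    (hb'2 : ∀ y, (∀ x, b' x y = 0) → y = 0)
    (d : U' →ₗ[K] U) (δ : V →ₗ[K] V')
    (hadj : ∀ u' v, b (d u') v = b' u' (δ v))
    (x : U) (hx : ∀ v, δ v = 0 → b x v = 0) :
    x ∈ LinearMap.range d := by
  by_contra hxr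
  set W := LinearMap.range d with hW
  have hmk : W.mkQ x ≠ 0 := by
    simpa [Submodule.mkQ_apply, Submodule.Quotient.mk_eq_zero] using hxr
  obtain ⟨g, hg⟩ : ∃ g : Module.Dual K (U ⧸ W), g (W.mkQ x) ≠ 0 := by
    by_contra h
    push_neg at h
    exact hmk ((Module.forall_dual_apply_eq_zero_iff K _).mp h)
  set f : Module.Dual K U := g ∘ₗ W.mkQ with hf
  -- b.flip : V →ₗ Dual U is surjective
  have hinjb : Function.Injective b := by
    rw [← LinearMap.ker_eq_bot]
    exact LinearMap.ker_eq_bot'.mpr fun m hm => hb1 m fun y => by rw [hm]; rfl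
  have hinjf : Function.Injective b.flip := by
    rw [← LinearMap.ker_eq_bot]
    exact LinearMap.ker_eq_bot'.mpr fun m hm => hb2 m fun y => by
      have := congrArg (fun h => h y) hm; simpa using this
  have h1 : Module.finrank K U ≤ Module.finrank K V := by
    have := LinearMap.finrank_le_finrank_of_injective hinjb
    rwa [Subspace.dual_finrank_eq] at this
  have h2 : Module.finrank K V ≤ Module.finrank K U := by
    have := LinearMap.finrank_le_finrank_of_injective hinjf
    rwa [Subspace.dual_finrank_eq] at this
  have hsurj : Function.Surjective b.flip :=
    (LinearMap.injective_iff_surjective_of_finrank_eq_finrank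
      (by rw [Subspace.dual_finrank_eq]; exact le_antisymm h2 h1)).mp hinjf
  obtain ⟨v, hv⟩ := hsurj f
  have hδv : δ v = 0 := by
    apply hb'2
    intro u'
    have : b (d u') v = f (d u') := by
      have := congrArg (fun h => h (d u')) hv; simpa using this
    rw [← hadj]
    rw [this, hf]
    have hz : W.mkQ (d u') = 0 := by
      simp [Submodule.mkQ_apply, Submodule.Quotient.mk_eq_zero, hW]
    simpa [hz] using congrArg g hz
  have := hx v hδv
  have hbxv : b x v = f x := by
    have := congrArg (fun h => h x) hv; simpa using this
  rw [hbxv] at this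
  exact hg (by simpa [hf] using this)

set_option maxHeartbeats 1000000 in
theorem bar_cobar_duality
    {K A : Type} [Field K] [CharZero K] [Ring A] [Algebra K A]
    (comulA : A →ₗ[K] A ⊗[K] A)
    (Bm : BimodData K A) (Bc : BicomodData K A)
    -- both complexes are complexes
    (hd2 : ∀ n, barD n Bm ∘ₗ barD (n+1) Bm = 0)
    (hδ2 : ∀ n, cobarD comulA (n+1) Bc ∘ₗ cobarD comulA n Bc = 0)
    -- the left coaction of the coBar coefficient is trivial
    (htriv : Bc.coactL = (TensorProduct.mk K A Bc.carrier) 1)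
    -- the pairing induced by the non-degenerate graded Hopf pairing on `S_σ̃(W)`
    (φ : (n : ℕ) →
      (chain n Bm).carrier →ₗ[K] (cochain comulA n Bc).carrier →ₗ[K] K)
    -- the Bar and coBar differentials are adjoint to each other under `φ`
    (hadj : ∀ (n : ℕ) (x : (chain (n+1) Bm).carrier) (y : (cochain comulA n Bc).carrier),
      φ n (barD n Bm x) y = φ (n+1) x (cobarD comulA n Bc y))
    -- the length gradations
    (GH : (n t : ℕ) → Submodule K (chain n Bm).carrier)
    (GC : (n t : ℕ) → Submodule K (cochain comulA n Bc).carrier)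
    (hGHsup : ∀ n, (⨆ t, GH n t) = ⊤) (hGHind : ∀ n, iSupIndep (GH n))
    (hGCsup : ∀ n, (⨆ t, GC n t) = ⊤) (hGCind : ∀ n, iSupIndep (GC n))
    -- the gradations have finite-dimensional components
    (hfdH : ∀ n t, FiniteDimensional K (GH n t))
    (hfdC : ∀ n t, FiniteDimensional K (GC n t))
    -- the differentials preserve the length gradations
    (hdgr : ∀ n t, Submodule.map (barD n Bm) (GH (n+1) t) ≤ GH n t)
    (hδgr : ∀ n t, Submodule.map (cobarD comulA n Bc) (GC n t) ≤ GC (n+1) t)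
    -- the pairing is graded ...
    (horth : ∀ n t t', t ≠ t' → ∀ x ∈ GH n t, ∀ y ∈ GC n t', φ n x y = 0)
    -- ... and non-degenerate in each length degree
    (hnd1 : ∀ n t, ∀ x ∈ GH n t, (∀ y ∈ GC n t, φ n x y = 0) → x = 0)
    (hnd2 : ∀ n t, ∀ y ∈ GC n t, (∀ x ∈ GH n t, φ n x y = 0) → y = 0) :
    ∀ n t : ℕ,
      ∃ Φ : (↥(cyclesBar Bm n ⊓ GH n t) ⧸
              Submodule.comap (cyclesBar Bm n ⊓ GH n t).subtype
                (LinearMap.range (barD n Bm))) →ₗ[K]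
            (↥(LinearMap.ker (cobarD comulA n Bc) ⊓ GC n t) ⧸
              Submodule.comap (LinearMap.ker (cobarD comulA n Bc) ⊓ GC n t).subtype
                (coboundCobar comulA Bc n)) →ₗ[K] K,
        -- `Φ` is induced by the pairing `φ`
        (∀ (x : (chain n Bm).carrier) (hx : x ∈ cyclesBar Bm n ⊓ GH n t)
            (y : (cochain comulA n Bc).carrier)
            (hy : y ∈ LinearMap.ker (cobarD comulA n Bc) ⊓ GC n t),
          Φ (Submodule.Quotient.mk ⟨x, hx⟩) (Submodule.Quotient.mk ⟨y, hy⟩) = φ n x y) ∧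
        -- `Φ` is non-degenerate
        (∀ a, (∀ b, Φ a b = 0) → a = 0) ∧
        (∀ b, (∀ a, Φ a b = 0) → b = 0) ∧
        -- in particular `H_n(…)_t ≅ Hoch^n(…)_t` as vector spaces
        Nonempty
          ((↥(cyclesBar Bm n ⊓ GH n t) ⧸
              Submodule.comap (cyclesBar Bm n ⊓ GH n t).subtype
                (LinearMap.range (barD n Bm))) ≃ₗ[K]
            (↥(LinearMap.ker (cobarD comulA n Bc) ⊓ GC n t) ⧸
              Submodule.comap (LinearMap.ker (cobarD comulA n Bc) ⊓ GC n t).subtype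
                (coboundCobar comulA Bc n))) := by
  intro n t
  classical
  -- Cycles pair trivially with coboundaries
  have hcob0 : ∀ (k : ℕ) (x : (chain k Bm).carrier), x ∈ cyclesBar Bm k →
      ∀ y ∈ coboundCobar comulA Bc k, φ k x y = 0 := by
    intro k x hx y hy
    cases k with
    | zero =>
      have hy' : y ∈ (⊥ : Submodule K (cochain comulA 0 Bc).carrier) := hy
      have hy0 : y = 0 := (Submodule.mem_bot K).mp hy'
      simp [hy0]
    | succ m =>
      obtain ⟨y', rfl⟩ : ∃ y', cobarD comulA m Bc y' = y := hy
      have hxk : barD m Bm x = 0 := hx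
      rw [← hadj m x y', hxk]
      simp
  -- A cocycle orthogonal to all graded cycles is a coboundary
  have hsurjco : ∀ (y : (cochain comulA n Bc).carrier),
      y ∈ GC n t →
      (∀ x, x ∈ cyclesBar Bm n → x ∈ GH n t → φ n x y = 0) →
      y ∈ coboundCobar comulA Bc n := by
    cases n with
    | zero =>
      intro y hyG hperp
      have hy0 : y = 0 := by
        apply hnd2 0 t y hyG
        intro x hxG
        exact hperp x Submodule.mem_top hxG
      show y ∈ (⊥ : Submodule K (cochain comulA 0 Bc).carrier)
      simp [hy0]
    | succ m =>
      intro y hyG hperp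
      haveI : FiniteDimensional K ↥(GH (m+1) t) := hfdH (m+1) t
      haveI : FiniteDimensional K ↥(GC (m+1) t) := hfdC (m+1) t
      haveI : FiniteDimensional K ↥(GH m t) := hfdH m t
      haveI : FiniteDimensional K ↥(GC m t) := hfdC m t
      have hdmem : ∀ z ∈ GH (m+1) t, barD m Bm z ∈ GH m t := fun z hz =>
        hdgr m t ⟨z, hz, rfl⟩
      have hδmem : ∀ z ∈ GC m t, cobarD comulA m Bc z ∈ GC (m+1) t := fun z hz =>
        hδgr m t ⟨z, hz, rfl⟩
      have hbp1 : ∀ (z : ↥(GH m t)),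
          (∀ x : ↥(GC m t),
            (((φ m ∘ₗ (GH m t).subtype).compl₂ (GC m t).subtype).flip x) z = 0) → z = 0 :=
        fun z h => Subtype.ext (hnd1 m t (z : _) z.2 fun w hw => h ⟨w, hw⟩)
      have hb1' : ∀ (x : ↥(GC (m+1) t)),
          (∀ z : ↥(GH (m+1) t),
            (((φ (m+1) ∘ₗ (GH (m+1) t).subtype).compl₂
              (GC (m+1) t).subtype).flip x) z = 0) → x = 0 :=
        fun x h => Subtype.ext (hnd2 (m+1) t (x : _) x.2 fun z hz => h ⟨z, hz⟩)
      have hb2' : ∀ (z : ↥(GH (m+1) t)),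
          (∀ x : ↥(GC (m+1) t),
            (((φ (m+1) ∘ₗ (GH (m+1) t).subtype).compl₂
              (GC (m+1) t).subtype).flip x) z = 0) → z = 0 :=
        fun z h => Subtype.ext (hnd1 (m+1) t (z : _) z.2 fun w hw => h ⟨w, hw⟩)
      have hadj' : ∀ (u' : ↥(GC m t)) (v : ↥(GH (m+1) t)),
          (((φ (m+1) ∘ₗ (GH (m+1) t).subtype).compl₂ (GC (m+1) t).subtype).flip
            ((cobarD comulA m Bc).restrict hδmem u')) v =
          (((φ m ∘ₗ (GH m t).subtype).compl₂ (GC m t).subtype).flip u')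
            ((barD m Bm).restrict hdmem v) := by
        intro u' v
        show φ (m+1) (v : _) (((cobarD comulA m Bc).restrict hδmem u' : _) : _)
          = φ m (((barD m Bm).restrict hdmem v : _) : _) (u' : _)
        rw [LinearMap.restrict_coe_apply, LinearMap.restrict_coe_apply]
        exact (hadj m (v : _) (u' : _)).symm
      have hyorth : ∀ v : ↥(GH (m+1) t), (barD m Bm).restrict hdmem v = 0 →
          (((φ (m+1) ∘ₗ (GH (m+1) t).subtype).compl₂ (GC (m+1) t).subtype).flip
            ⟨y, hyG⟩) v = 0 := by
        intro v hv
        have hvk : barD m Bm (v : _) = 0 := by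
          have := congrArg Subtype.val hv
          rwa [LinearMap.restrict_coe_apply] at this
        exact hperp (v : _) hvk v.2
      obtain ⟨u', hu'⟩ :=
        key (((φ (m+1) ∘ₗ (GH (m+1) t).subtype).compl₂ (GC (m+1) t).subtype).flip)
          hb1' hb2'
          (((φ m ∘ₗ (GH m t).subtype).compl₂ (GC m t).subtype).flip)
          hbp1
          ((cobarD comulA m Bc).restrict hδmem) ((barD m Bm).restrict hdmem)
          hadj' ⟨y, hyG⟩ hyorth
      refine ⟨(u' : _), ?_⟩
      have := congrArg Subtype.val hu'
      rwa [LinearMap.restrict_coe_apply] at this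
  -- A graded cycle orthogonal to all graded cocycles is a boundary
  have hsurjbo : ∀ (x : (chain n Bm).carrier),
      x ∈ GH n t →
      (∀ y, cobarD comulA n Bc y = 0 → y ∈ GC n t → φ n x y = 0) →
      x ∈ LinearMap.range (barD n Bm) := by
    intro x hxG hperp
    haveI : FiniteDimensional K ↥(GH n t) := hfdH n t
    haveI : FiniteDimensional K ↥(GC n t) := hfdC n t
    haveI : FiniteDimensional K ↥(GH (n+1) t) := hfdH (n+1) t
    haveI : FiniteDimensional K ↥(GC (n+1) t) := hfdC (n+1) t
    have hdmem : ∀ z ∈ GH (n+1) t, barD n Bm z ∈ GH n t := fun z hz =>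
      hdgr n t ⟨z, hz, rfl⟩
    have hδmem : ∀ z ∈ GC n t, cobarD comulA n Bc z ∈ GC (n+1) t := fun z hz =>
      hδgr n t ⟨z, hz, rfl⟩
    have hb1 : ∀ (u : ↥(GH n t)),
        (∀ v : ↥(GC n t),
          ((φ n ∘ₗ (GH n t).subtype).compl₂ (GC n t).subtype) u v = 0) → u = 0 :=
      fun u h => Subtype.ext (hnd1 n t (u : _) u.2 fun z hz => h ⟨z, hz⟩)
    have hb2 : ∀ (v : ↥(GC n t)),
        (∀ u : ↥(GH n t),
          ((φ n ∘ₗ (GH n t).subtype).compl₂ (GC n t).subtype) u v = 0) → v = 0 :=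
      fun v h => Subtype.ext (hnd2 n t (v : _) v.2 fun z hz => h ⟨z, hz⟩)
    have hb'2 : ∀ (v : ↥(GC (n+1) t)),
        (∀ u : ↥(GH (n+1) t),
          ((φ (n+1) ∘ₗ (GH (n+1) t).subtype).compl₂ (GC (n+1) t).subtype) u v = 0) →
          v = 0 :=
      fun v h => Subtype.ext (hnd2 (n+1) t (v : _) v.2 fun z hz => h ⟨z, hz⟩)
    have hadj' : ∀ (u' : ↥(GH (n+1) t)) (v : ↥(GC n t)),
        ((φ n ∘ₗ (GH n t).subtype).compl₂ (GC n t).subtype)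
          ((barD n Bm).restrict hdmem u') v =
        ((φ (n+1) ∘ₗ (GH (n+1) t).subtype).compl₂ (GC (n+1) t).subtype) u'
          ((cobarD comulA n Bc).restrict hδmem v) := by
      intro u' v
      show φ n (((barD n Bm).restrict hdmem u' : _) : _) (v : _)
        = φ (n+1) (u' : _) (((cobarD comulA n Bc).restrict hδmem v : _) : _)
      rw [LinearMap.restrict_coe_apply, LinearMap.restrict_coe_apply]
      exact hadj n (u' : _) (v : _)
    have hxorth : ∀ v : ↥(GC n t), (cobarD comulA n Bc).restrict hδmem v = 0 →
        ((φ n ∘ₗ (GH n t).subtype).compl₂ (GC n t).subtype) ⟨x, hxG⟩ v = 0 := by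
      intro v hv
      have hvk : cobarD comulA n Bc (v : _) = 0 := by
        have := congrArg Subtype.val hv
        rwa [LinearMap.restrict_coe_apply] at this
      exact hperp (v : _) hvk v.2
    obtain ⟨u', hu'⟩ :=
      key ((φ n ∘ₗ (GH n t).subtype).compl₂ (GC n t).subtype) hb1 hb2
        ((φ (n+1) ∘ₗ (GH (n+1) t).subtype).compl₂ (GC (n+1) t).subtype) hb'2
        ((barD n Bm).restrict hdmem) ((cobarD comulA n Bc).restrict hδmem)
        hadj' ⟨x, hxG⟩ hxorth
    refine ⟨(u' : _), ?_⟩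
    have := congrArg Subtype.val hu'
    rwa [LinearMap.restrict_coe_apply] at this
  -- Now build Φ
  set ZH : Submodule K (chain n Bm).carrier := cyclesBar Bm n ⊓ GH n t with hZHdef
  set ZC : Submodule K (cochain comulA n Bc).carrier :=
    LinearMap.ker (cobarD comulA n Bc) ⊓ GC n t with hZCdef
  set NH : Submodule K ↥ZH :=
    Submodule.comap ZH.subtype (LinearMap.range (barD n Bm)) with hNHdef
  set NC : Submodule K ↥ZC :=
    Submodule.comap ZC.subtype (coboundCobar comulA Bc n) with hNCdef
  set ψ : ↥ZC →ₗ[K] ↥ZH →ₗ[K] K :=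
    ((((φ n) ∘ₗ ZH.subtype).compl₂ ZC.subtype)).flip with hψdef
  have hψval : ∀ (y : ↥ZC) (x : ↥ZH), ψ y x = φ n (x : _) (y : _) := fun _ _ => rfl
  have hψNC : NC ≤ LinearMap.ker ψ := by
    intro y hy
    rw [LinearMap.mem_ker]
    ext x
    rw [hψval]
    have hcb : φ n (x : _) (y : _) = 0 := hcob0 n (x : _) x.2.1 (y : _) hy
    simpa using hcb
  set ΦC : (↥ZC ⧸ NC) →ₗ[K] ↥ZH →ₗ[K] K := NC.liftQ ψ hψNC with hΦCdef
  have hΦH : NH ≤ LinearMap.ker ΦC.flip := by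
    intro x hx
    rw [LinearMap.mem_ker]
    ext y
    obtain ⟨x', hx'⟩ : x.1 ∈ LinearMap.range (barD n Bm) := hx
    have hyk : cobarD comulA n Bc (y : _) = 0 := LinearMap.mem_ker.mp y.2.1
    show ψ y x = 0
    rw [hψval, ← hx', hadj n x' (y : _), hyk]
    simp
  set Φ : (↥ZH ⧸ NH) →ₗ[K] (↥ZC ⧸ NC) →ₗ[K] K := NH.liftQ ΦC.flip hΦH with hΦdef
  have hΦval : ∀ (x : ↥ZH) (y : ↥ZC),
      Φ (Submodule.Quotient.mk x) (Submodule.Quotient.mk y) = φ n (x : _) (y : _) :=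
    fun _ _ => rfl
  -- Left non-degeneracy
  have hL : ∀ a, (∀ c, Φ a c = 0) → a = 0 := by
    intro a ha
    obtain ⟨x, rfl⟩ := Submodule.Quotient.mk_surjective NH a
    rw [Submodule.Quotient.mk_eq_zero]
    show x.1 ∈ LinearMap.range (barD n Bm)
    apply hsurjbo x.1 x.2.2
    intro y hyk hyG
    have hyZ : y ∈ ZC := ⟨LinearMap.mem_ker.mpr hyk, hyG⟩
    have := ha (Submodule.Quotient.mk ⟨y, hyZ⟩)
    rwa [hΦval x ⟨y, hyZ⟩] at this
  -- Right non-degeneracy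
  have hR : ∀ c, (∀ a, Φ a c = 0) → c = 0 := by
    intro c hc
    obtain ⟨y, rfl⟩ := Submodule.Quotient.mk_surjective NC c
    rw [Submodule.Quotient.mk_eq_zero]
    show y.1 ∈ coboundCobar comulA Bc n
    apply hsurjco y.1 y.2.2
    intro x hxk hxG
    have hxZ : x ∈ ZH := ⟨hxk, hxG⟩
    have := hc (Submodule.Quotient.mk ⟨x, hxZ⟩)
    rwa [hΦval ⟨x, hxZ⟩ y] at this
  -- the isomorphism
  haveI : FiniteDimensional K ↥(GH n t) := hfdH n t
  haveI : FiniteDimensional K ↥(GC n t) := hfdC n t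
  haveI : FiniteDimensional K ↥ZH := Submodule.finiteDimensional_of_le inf_le_right
  haveI : FiniteDimensional K ↥ZC := Submodule.finiteDimensional_of_le inf_le_right
  have hinjL : Function.Injective Φ := by
    rw [← LinearMap.ker_eq_bot]
    exact LinearMap.ker_eq_bot'.mpr fun a ha => hL a fun c => by rw [ha]; rfl
  have hinjR : Function.Injective Φ.flip := by
    rw [← LinearMap.ker_eq_bot]
    refine LinearMap.ker_eq_bot'.mpr fun c hc => hR c fun a => ?_
    have := congrArg (fun h => h a) hc
    simpa using this
  have hfr : Module.finrank K (↥ZH ⧸ NH) = Module.finrank K (↥ZC ⧸ NC) := by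
    have h1 := LinearMap.finrank_le_finrank_of_injective hinjL
    have h2 := LinearMap.finrank_le_finrank_of_injective hinjR
    rw [Subspace.dual_finrank_eq] at h1 h2
    exact le_antisymm h1 h2
  exact ⟨Φ, fun x hx y hy => hΦval ⟨x, hx⟩ ⟨y, hy⟩, hL, hR,
    ⟨LinearEquiv.ofFinrankEq _ _ hfr⟩⟩

end Stmt8
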